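/- On ℝ^n (n ≥ 3) with flat metric, for ℓ ≥ 1 and a covector-valued function μ_b, the identity Δ^ℓ (Z_B^b μ_b) = -2ℓ Y_B ∇^b Δ^{ℓ-1} μ_b + Z_B^b Δ^ℓ μ_b holds, where the tractor projectors satisfy ∇_a Z_B^b μ_b = -Y_B μ_a + Z_B^b ∇_a μ_b and ∇_a Y_B σ = Y_B ∇_a σ (flat case), and Δ = ∇^a ∇_a with all ∇_a mutually commuting. -/

import Mathlib

/-!
Each application of `Δ = ∑ₐ ∇ₐ∇ₐ` to `Z^b ν_b` produces, by the Leibniz-type rule for `∇ₐ Z^b`,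
two copies of `-Y ∇^b ν_b` plus `Z^b Δ ν_b`. Since `Y` intertwines the two Laplacians and `Δ`
commutes with every `∇_b`, the `Y`-terms produced by the successive applications all equal
`-2 Y ∇^b Δ^{ℓ-1} μ_b`, so there are `ℓ` of them.
-/

open Finset

section Laplacian

variable {R ι V W : Type*} [CommRing R] [Fintype ι]
  [AddCommGroup V] [Module R V] [AddCommGroup W] [Module R W]

def laplacian (D : ι → Module.End R V) : Module.End R V := ∑ a, D a * D a

theorem laplacian_apply (D : ι → Module.End R V) (v : V) :
    laplacian D v = ∑ a, D a (D a v) := by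
  simp only [laplacian, LinearMap.sum_apply, Module.End.mul_apply]

theorem commute_laplacian {D : ι → Module.End R V} (hcomm : ∀ a b, D a * D b = D b * D a)
    (b : ι) : Commute (laplacian D) (D b) :=
  Commute.sum_left _ _ _ fun a _ =>
    (show Commute (D a) (D b) from hcomm a b).mul_left (hcomm a b)

theorem laplacian_apply_pow_apply {D : ι → Module.End R V}
    (hcomm : ∀ a b, D a * D b = D b * D a) (b : ι) (k : ℕ) (v : V) :
    laplacian D (D b ((laplacian D ^ k) v)) = D b ((laplacian D ^ (k + 1)) v) := by
  rw [← Module.End.mul_apply, ← Module.End.mul_apply, (commute_laplacian hcomm b).eq, mul_assoc,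
    ← pow_succ', Module.End.mul_apply]

theorem laplacian_apply_of_intertwines {Dv : ι → Module.End R V} {Dw : ι → Module.End R W}
    {f : V →ₗ[R] W} (hf : ∀ a v, Dw a (f v) = f (Dv a v)) (v : V) :
    laplacian Dw (f v) = f (laplacian Dv v) := by
  simp only [laplacian_apply, map_sum, hf]

variable {Dv : ι → Module.End R V} {Dw : ι → Module.End R W} {Y : V →ₗ[R] W}
  {Z : ι → V →ₗ[R] W}

theorem laplacian_apply_sum_Z (hY : ∀ a σ, Dw a (Y σ) = Y (Dv a σ))
    (hZ : ∀ a (μ : ι → V), Dw a (∑ b, Z b (μ b)) = -(Y (μ a)) + ∑ b, Z b (Dv a (μ b)))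
    (ν : ι → V) :
    laplacian Dw (∑ b, Z b (ν b))
      = (-2 : R) • Y (∑ b, Dv b (ν b)) + ∑ b, Z b (laplacian Dv (ν b)) := by
  have hterm : ∀ a, Dw a (Dw a (∑ b, Z b (ν b)))
      = (-2 : R) • Y (Dv a (ν a)) + ∑ b, Z b (Dv a (Dv a (ν b))) := fun a => by
    rw [hZ a ν, map_add, map_neg, hY, hZ a fun b => Dv a (ν b)]
    module
  rw [laplacian_apply]
  simp only [hterm]
  rw [sum_add_distrib, ← smul_sum, ← map_sum, sum_comm]
  simp only [laplacian_apply, map_sum]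

theorem laplacian_pow_succ_apply_sum_Z (hcomm : ∀ a b, Dv a * Dv b = Dv b * Dv a)
    (hY : ∀ a σ, Dw a (Y σ) = Y (Dv a σ))
    (hZ : ∀ a (μ : ι → V), Dw a (∑ b, Z b (μ b)) = -(Y (μ a)) + ∑ b, Z b (Dv a (μ b)))
    (μ : ι → V) (k : ℕ) :
    (laplacian Dw ^ (k + 1)) (∑ b, Z b (μ b))
      = (-(2 * ((k + 1 : ℕ) : R))) • Y (∑ b, Dv b ((laplacian Dv ^ k) (μ b)))
        + ∑ b, Z b ((laplacian Dv ^ (k + 1)) (μ b)) := by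
  induction k with
  | zero =>
    rw [zero_add, pow_one, laplacian_apply_sum_Z hY hZ]
    simp
  | succ k ih =>
    rw [pow_succ', Module.End.mul_apply, ih, map_add, map_smul,
      laplacian_apply_of_intertwines hY, map_sum, laplacian_apply_sum_Z hY hZ]
    simp only [laplacian_apply_pow_apply hcomm]
    simp only [← Module.End.mul_apply, ← pow_succ']
    push_cast
    module

end Laplacian

theorem laplacian_power_commute_Z_general
    (n ℓ : ℕ)
    (V W : Type) [AddCommGroup V] [Module ℝ V] [AddCommGroup W] [Module ℝ W]
    (Dv : Fin n → Module.End ℝ V) (Dw : Fin n → Module.End ℝ W)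
    (Y : V →ₗ[ℝ] W) (Z : Fin n → V →ₗ[ℝ] W)
    (hcomm : ∀ a b, Dv a * Dv b = Dv b * Dv a)
    (hY : ∀ (a : Fin n) (σ : V), Dw a (Y σ) = Y (Dv a σ))
    (hZ : ∀ (a : Fin n) (μ : Fin n → V),
      Dw a (∑ b, Z b (μ b)) = -(Y (μ a)) + ∑ b, Z b (Dv a (μ b)))
    (μ : Fin n → V) :
    ((∑ a, Dw a * Dw a) ^ ℓ) (∑ b, Z b (μ b))
      = (-(2 * (ℓ : ℝ))) •
            Y (∑ b, Dv b (((∑ a, Dv a * Dv a) ^ (ℓ - 1)) (μ b)))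
        + ∑ b, Z b (((∑ a, Dv a * Dv a) ^ ℓ) (μ b)) := by
  cases ℓ with
  | zero => simp
  | succ k => exact laplacian_pow_succ_apply_sum_Z hcomm hY hZ μ k

/-- Formula (Decomp), second line: on flat `ℝ^n`,
`Δ^ℓ (Z^b μ_b) = -2ℓ Y ∇^b Δ^{ℓ-1} μ_b + Z^b Δ^ℓ μ_b`,
modeled abstractly via modules with commuting operators `∇_a` and formal tractor
generators `Y, Z^b` obeying the flat commutation rules. -/
theorem laplacian_power_commute_Z
    (n ℓ : ℕ) (hn : 3 ≤ n) (hl : 1 ≤ ℓ)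
    (V W : Type) [AddCommGroup V] [Module ℝ V] [AddCommGroup W] [Module ℝ W]
    (Dv : Fin n → Module.End ℝ V) (Dw : Fin n → Module.End ℝ W)
    (Y : V →ₗ[ℝ] W) (Z : Fin n → V →ₗ[ℝ] W)
    (hcomm : ∀ a b, Dv a * Dv b = Dv b * Dv a)
    (hY : ∀ (a : Fin n) (σ : V), Dw a (Y σ) = Y (Dv a σ))
    (hZ : ∀ (a : Fin n) (μ : Fin n → V),
      Dw a (∑ b, Z b (μ b)) = -(Y (μ a)) + ∑ b, Z b (Dv a (μ b)))
    (μ : Fin n → V) :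
    ((∑ a, Dw a * Dw a) ^ ℓ) (∑ b, Z b (μ b))
      = (-(2 * (ℓ : ℝ))) •
            Y (∑ b, Dv b (((∑ a, Dv a * Dv a) ^ (ℓ - 1)) (μ b)))
        + ∑ b, Z b (((∑ a, Dv a * Dv a) ^ ℓ) (μ b)) :=
  laplacian_power_commute_Z_general n ℓ V W Dv Dw Y Z hcomm hY hZ μ
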